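/- Let Δ be a probabilistic one-counter automaton with control states Q, and let ℱ_Δ be its underlying finite pLTS. Then in the disjoint-union pLTS of S(Δ) and ℱ_Δ, for every control state p and every m ∈ ℕ one has pXᵐZ ∼ₘ p, i.e., the configuration pXᵐZ and the state p of ℱ_Δ are related by the m-th bisimulation approximant. -/
import Mathlib


open scoped ENNReal

noncomputable section

/-- A probabilistic labelled transition system (pLTS): states `S`, alphabet `A`,
and a transition relation into probability distributions (`PMF`s) on `S`. -/
structure PLTS (S : Type) (A : Type) where
  Tr : S → A → PMF S → Prop

namespace PLTS

variable {S A : Type}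

/-- The mass that a distribution assigns to a set of states. -/
def mass (d : PMF S) (E : Set S) : ℝ≥0∞ := ∑' s : E, d s

/-- Two distributions are `r`-equivalent if they assign equal mass to every
`r`-equivalence class (for an equivalence `r`, the classes are the sets `{t | r s t}`). -/
def REquiv (r : S → S → Prop) (d d' : PMF S) : Prop :=
  ∀ s : S, mass d {t | r s t} = mass d' {t | r s t}

/-- An equivalence relation is a bisimulation if related states can match
each other's transitions with `r`-equivalent target distributions. -/
def IsBisimulation (L : PLTS S A) (r : S → S → Prop) : Prop :=
  Equivalence r ∧
    ∀ s t, r s t → ∀ a d, L.Tr s a d → ∃ d', L.Tr t a d' ∧ REquiv r d d'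

/-- Bisimilarity: the union of all bisimulation relations. -/
def Bisim (L : PLTS S A) (s t : S) : Prop :=
  ∃ r, L.IsBisimulation r ∧ r s t

/-- The bisimulation approximants `∼ₙ`. -/
def approx (L : PLTS S A) : ℕ → S → S → Prop
  | 0 => fun _ _ => True
  | n + 1 => fun s t =>
      (∀ a d, L.Tr s a d → ∃ d', L.Tr t a d' ∧ REquiv (L.approx n) d d') ∧
      (∀ a d', L.Tr t a d' → ∃ d, L.Tr s a d ∧ REquiv (L.approx n) d d')

/-- A pLTS is finitely branching if every state has finitely many transitions. -/
def FinBranching (L : PLTS S A) : Prop :=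
  ∀ s, {p : A × PMF S | L.Tr s p.1 p.2}.Finite

/-- One-step successor relation: `s → s'` iff some transition of `s` gives `s'`
positive probability. -/
def Step (L : PLTS S A) (s s' : S) : Prop :=
  ∃ a d, L.Tr s a d ∧ d s' ≠ 0

end PLTS

/-- The rules of a probabilistic pushdown automaton (pPDA) with control states
`Q`, stack alphabet `Γ`, input alphabet `A`: a rule `qX –a↪ d` is a tuple
`(q, X, a, d)` where `d` is a distribution over pairs of a control state and
a string of length at most two that replaces the top symbol. -/
def PPDARules (Q Γ A : Type) := Q → Γ → A → PMF (Q × List Γ) → Prop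

/-- Well-formedness of pPDA rules: target distributions are supported on
configurations `(p, α)` with `|α| ≤ 2` (i.e. `α ∈ Γ^{≤2}`). -/
def PPDAWf {Q Γ A : Type} (Δ : PPDARules Q Γ A) : Prop :=
  ∀ q X a d, Δ q X a d → ∀ p (α : List Γ), d (p, α) ≠ 0 → α.length ≤ 2

/-- A nondeterministic PDA is a pPDA all of whose rules use Dirac distributions. -/
def IsPDA {Q Γ A : Type} (Δ : PPDARules Q Γ A) : Prop :=
  ∀ q X a d, Δ q X a d → ∃ c, d = PMF.pure c

/-- The pLTS induced by a pPDA on configurations `Q × Γ*`: a rule `qX –a↪ d`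
and a tail `β ∈ Γ*` induce the transition `qXβ –a→ d'` with `d'(pαβ) = d(pα)`;
configurations with empty stack have no transitions. -/
def PPDARules.plts {Q Γ A : Type} (Δ : PPDARules Q Γ A) : PLTS (Q × List Γ) A where
  Tr := fun c a d' => ∃ (q : Q) (X : Γ) (β : List Γ) (d : PMF (Q × List Γ)),
    c = (q, X :: β) ∧ Δ q X a d ∧ d' = d.map (fun pα => (pα.1, pα.2 ++ β))

/-- The stack alphabet `{X, Z}` of a one-counter automaton. -/
inductive OCSym : Type
  | X : OCSym
  | Z : OCSym
deriving DecidableEq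

/-- Well-formedness of pOCA rules: `Z` always and only occurs at the bottom of
the stack, i.e. rules for top `X` rewrite `X` into `ε`, `X` or `XX`, and rules
for top `Z` rewrite `Z` into `Z` or `XZ`. -/
def POCAWf {Q A : Type} (Δ : PPDARules Q OCSym A) : Prop :=
  (∀ q a d, Δ q OCSym.X a d → ∀ p (α : List OCSym), d (p, α) ≠ 0 →
      α = [] ∨ α = [OCSym.X] ∨ α = [OCSym.X, OCSym.X]) ∧
  (∀ q a d, Δ q OCSym.Z a d → ∀ p (α : List OCSym), d (p, α) ≠ 0 →
      α = [OCSym.Z] ∨ α = [OCSym.X, OCSym.Z])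

/-- The configuration `pXᵐZ` of a pOCA. -/
def oconf {Q : Type} (p : Q) (m : ℕ) : Q × List OCSym :=
  (p, List.replicate m OCSym.X ++ [OCSym.Z])

/-- The finite pLTS `ℱ_Δ` underlying a pOCA: `p –a→ d'` iff there is a rule
`pX –a↪ d` with `d'(q) = d(q,ε) + d(q,X) + d(q,XX)` for all `q`. -/
def underlying {Q A : Type} (Δ : PPDARules Q OCSym A) : PLTS Q A where
  Tr := fun p a d' => ∃ d, Δ p OCSym.X a d ∧
    ∀ q : Q, d' q = d (q, []) + d (q, [OCSym.X]) + d (q, [OCSym.X, OCSym.X])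

/-- The disjoint-union pLTS of two pLTSs over the same alphabet. -/
def PLTS.sum {S₁ S₂ A : Type} (L₁ : PLTS S₁ A) (L₂ : PLTS S₂ A) :
    PLTS (S₁ ⊕ S₂) A where
  Tr := fun s a d =>
    (∃ s₁ d₁, s = Sum.inl s₁ ∧ L₁.Tr s₁ a d₁ ∧ d = d₁.map Sum.inl) ∨
    (∃ s₂ d₂, s = Sum.inr s₂ ∧ L₂.Tr s₂ a d₂ ∧ d = d₂.map Sum.inr)

/-- `INC`: configurations `pXᵐZ` that are not related by the `k`-th
approximant (`k = |Q|`) to any state `q` of the underlying finite pLTS, in the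
disjoint union of `S(Δ)` and `ℱ_Δ`. -/
def InINC {Q A : Type} [Fintype Q] (Δ : PPDARules Q OCSym A)
    (p : Q) (m : ℕ) : Prop :=
  ∀ q : Q, ¬ (Δ.plts.sum (underlying Δ)).approx (Fintype.card Q)
      (Sum.inl (oconf p m)) (Sum.inr q)

/-- `ℓ` one-step successor moves lead from `s` to `t`. -/
def PLTS.StepN {S A : Type} (L : PLTS S A) : ℕ → S → S → Prop
  | 0, s, t => s = t
  | n + 1, s, t => ∃ u, L.Step s u ∧ L.StepN n u t

/-- `dist(c)`: the least number of one-step successor moves in `S(Δ)` leading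
from the configuration `c` to some configuration in `INC` (and `∞ = ⊤` if
`INC` is unreachable). -/
def distINC {Q A : Type} [Fintype Q] (Δ : PPDARules Q OCSym A)
    (c : Q × List OCSym) : ℕ∞ :=
  sInf {n : ℕ∞ | ∃ ℓ : ℕ, n = (ℓ : ℕ∞) ∧
    ∃ (p : Q) (m : ℕ), Δ.plts.StepN ℓ c (oconf p m) ∧ InINC Δ p m}

section Aux

variable {S A : Type}

lemma PLTS.mass_eq (d : PMF S) (E : Set S) : PLTS.mass d E = d.toOuterMeasure E := by
  rw [PMF.toOuterMeasure_apply, PLTS.mass, tsum_subtype]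

lemma PLTS.mass_map {T : Type} (d : PMF S) (f : S → T) (E : Set T) :
    PLTS.mass (d.map f) E = PLTS.mass d (f ⁻¹' E) := by
  rw [PLTS.mass_eq, PLTS.mass_eq, PMF.toOuterMeasure_map_apply]

lemma PLTS.mass_congr (d : PMF S) {E E' : Set S}
    (h : ∀ x, d x ≠ 0 → (x ∈ E ↔ x ∈ E')) : PLTS.mass d E = PLTS.mass d E' := by
  rw [PLTS.mass_eq, PLTS.mass_eq, PMF.toOuterMeasure_apply, PMF.toOuterMeasure_apply]
  refine tsum_congr fun x => ?_
  unfold Set.indicator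
  by_cases hx : d x = 0
  · split <;> split <;> simp [hx]
  · by_cases hE : x ∈ E
    · rw [if_pos hE, if_pos ((h x hx).mp hE)]
    · rw [if_neg hE, if_neg (fun hc => hE ((h x hx).mpr hc))]

lemma PLTS.approx_equivalence (L : PLTS S A) (n : ℕ) : Equivalence (L.approx n) := by
  cases n with
  | zero => exact ⟨fun _ => trivial, fun _ => trivial, fun _ _ => trivial⟩
  | succ n =>
    refine ⟨?_, ?_, ?_⟩
    · exact fun s => ⟨fun a d h => ⟨d, h, fun _ => rfl⟩, fun a d h => ⟨d, h, fun _ => rfl⟩⟩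
    · rintro s t ⟨h1, h2⟩
      refine ⟨fun a d hd => ?_, fun a d' hd' => ?_⟩
      · obtain ⟨d0, hTr, hE⟩ := h2 a d hd
        exact ⟨d0, hTr, fun s => (hE s).symm⟩
      · obtain ⟨d0, hTr, hE⟩ := h1 a d' hd'
        exact ⟨d0, hTr, fun s => (hE s).symm⟩
    · rintro s t u ⟨h1, h1'⟩ ⟨h2, h2'⟩
      refine ⟨fun a d hd => ?_, fun a d' hd' => ?_⟩
      · obtain ⟨d1, hT1, hE1⟩ := h1 a d hd
        obtain ⟨d2, hT2, hE2⟩ := h2 a d1 hT1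
        exact ⟨d2, hT2, fun s => (hE1 s).trans (hE2 s)⟩
      · obtain ⟨d1, hT1, hE1⟩ := h2' a d' hd'
        obtain ⟨d2, hT2, hE2⟩ := h1' a d1 hT1
        exact ⟨d2, hT2, fun s => (hE2 s).trans (hE1 s)⟩

end Aux

section Key

variable {Q A : Type}

/-- For a rule with top symbol `X`, the pushforward along `Prod.fst` computes the
underlying finite pLTS distribution. -/
lemma map_fst_apply (Δ : PPDARules Q OCSym A) (hwf : POCAWf Δ)
    {q : Q} {a : A} {d : PMF (Q × List OCSym)} (hd : Δ q OCSym.X a d) (q' : Q) :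
    (d.map Prod.fst) q' =
      d (q', []) + d (q', [OCSym.X]) + d (q', [OCSym.X, OCSym.X]) := by
  classical
  rw [PMF.map_apply]
  have hzero : ∀ pα : Q × List OCSym,
      pα ∉ ({(q', ([] : List OCSym)), (q', [OCSym.X]), (q', [OCSym.X, OCSym.X])} :
        Finset (Q × List OCSym)) → (if q' = pα.1 then d pα else 0) = 0 := by
    rintro ⟨q'', α⟩ hmem
    by_cases hq : q' = q''
    · subst hq
      rw [if_pos rfl]
      by_contra hne
      rcases hwf.1 q a d hd q' α hne with h | h | h <;>
        simp [h] at hmem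
    · simp [hq]
  rw [tsum_eq_sum hzero]
  have h1 : ((q', ([] : List OCSym)) : Q × List OCSym) ≠ (q', [OCSym.X]) := by simp
  have h2 : ((q', ([] : List OCSym)) : Q × List OCSym) ≠ (q', [OCSym.X, OCSym.X]) := by simp
  have h3 : ((q', [OCSym.X]) : Q × List OCSym) ≠ (q', [OCSym.X, OCSym.X]) := by simp
  rw [Finset.sum_insert (by simp [h1, h2]), Finset.sum_insert (by simp [h3]),
    Finset.sum_singleton]
  simp [add_assoc]

lemma key_requiv [Fintype Q] (Δ : PPDARules Q OCSym A) (hwf : POCAWf Δ)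
    {n m : ℕ} (hm : n ≤ m)
    (ih : ∀ p' m', n ≤ m' →
      (Δ.plts.sum (underlying Δ)).approx n (Sum.inl (oconf p' m')) (Sum.inr p'))
    {q : Q} {a : A} {d : PMF (Q × List OCSym)} (hd : Δ q OCSym.X a d) :
    PLTS.REquiv ((Δ.plts.sum (underlying Δ)).approx n)
      ((d.map (fun pα => (pα.1, pα.2 ++ (List.replicate m OCSym.X ++ [OCSym.Z])))).map
        Sum.inl)
      ((d.map Prod.fst).map Sum.inr) := by
  intro s
  set L := Δ.plts.sum (underlying Δ)
  set C : Set ((Q × List OCSym) ⊕ Q) := {t | L.approx n s t}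
  rw [PLTS.mass_map, PLTS.mass_map, PLTS.mass_map, PLTS.mass_map]
  apply PLTS.mass_congr
  rintro ⟨q', α⟩ hne
  have heqv := PLTS.approx_equivalence L n
  have hrel : ∀ k, n ≤ k → (Sum.inl (oconf q' k) ∈ C ↔ Sum.inr q' ∈ C) := by
    intro k hk
    have h := ih q' k hk
    exact ⟨fun hc => heqv.trans hc h, fun hc => heqv.trans hc (heqv.symm h)⟩
  rcases hwf.1 q a d hd q' α hne with h | h | h <;> subst h
  · simpa [oconf] using hrel m hm
  · have : OCSym.X :: (List.replicate m OCSym.X ++ [OCSym.Z]) =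
        List.replicate (m + 1) OCSym.X ++ [OCSym.Z] := by
      simp [List.replicate_succ]
    simpa [oconf, this] using hrel (m + 1) (by omega)
  · have : OCSym.X :: OCSym.X :: (List.replicate m OCSym.X ++ [OCSym.Z]) =
        List.replicate (m + 2) OCSym.X ++ [OCSym.Z] := by
      simp [List.replicate_succ]
    simpa [oconf, this] using hrel (m + 2) (by omega)

lemma key_approx [Fintype Q] (Δ : PPDARules Q OCSym A) (hwf : POCAWf Δ) :
    ∀ n p m, n ≤ m →
      (Δ.plts.sum (underlying Δ)).approx n (Sum.inl (oconf p m)) (Sum.inr p) := by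
  intro n
  induction n with
  | zero => intro p m _; trivial
  | succ n ih =>
    intro p m hm
    obtain ⟨m, rfl⟩ : ∃ m', m = m' + 1 := ⟨m - 1, by omega⟩
    have hm' : n ≤ m := by omega
    have hconf : oconf p (m + 1) =
        (p, OCSym.X :: (List.replicate m OCSym.X ++ [OCSym.Z])) := by
      simp [oconf, List.replicate_succ]
    constructor
    · rintro a D (⟨s₁, d₁, hs, hTr, rfl⟩ | ⟨s₂, d₂, hs, _, _⟩)
      · obtain ⟨q, X, β, d, hc, hrule, rfl⟩ := hTr
        rw [← Sum.inl_injective hs, hconf] at hc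
        obtain ⟨rfl, rfl, rfl⟩ : p = q ∧ OCSym.X = X ∧
            List.replicate m OCSym.X ++ [OCSym.Z] = β := by
          injection hc with h1 h2
          injection h2 with h3 h4
          exact ⟨h1, h3, h4⟩
        refine ⟨(d.map Prod.fst).map Sum.inr, Or.inr ⟨p, d.map Prod.fst, rfl,
          ⟨d, hrule, map_fst_apply Δ hwf hrule⟩, rfl⟩, ?_⟩
        exact key_requiv Δ hwf hm' ih hrule
      · exact absurd hs (by simp)
    · rintro a D (⟨s₁, d₁, hs, _, _⟩ | ⟨s₂, d₂, hs, hTr, rfl⟩)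
      · exact absurd hs (by simp)
      · obtain ⟨d, hrule, hval⟩ := hTr
        rw [← Sum.inr_injective hs] at hrule
        have hd₂ : d₂ = d.map Prod.fst := by
          ext q'
          rw [hval q', map_fst_apply Δ hwf hrule]
        refine ⟨(d.map (fun pα =>
            (pα.1, pα.2 ++ (List.replicate m OCSym.X ++ [OCSym.Z])))).map Sum.inl,
          Or.inl ⟨oconf p (m + 1), _, rfl,
            ⟨p, OCSym.X, List.replicate m OCSym.X ++ [OCSym.Z], d, hconf, hrule, rfl⟩, rfl⟩, ?_⟩
        rw [hd₂]
        exact key_requiv Δ hwf hm' ih hrule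

end Key

/-- For a pOCA `Δ`, in the disjoint union of `S(Δ)` and the
underlying finite pLTS `ℱ_Δ`, the configuration `pXᵐZ` and the state `p` of
`ℱ_Δ` are related by the `m`-th approximant: `pXᵐZ ∼ₘ p`. -/
theorem oconf_approx_underlying (Q A : Type) [Fintype Q] [Fintype A]
    (Δ : PPDARules Q OCSym A) (hwf : POCAWf Δ) (p : Q) (m : ℕ) :
    (Δ.plts.sum (underlying Δ)).approx m (Sum.inl (oconf p m)) (Sum.inr p) := by
  exact key_approx Δ hwf m p m le_rfl
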